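/- arXiv:2409.00762 — 8 statements merged into one kernel-verified Lean document; each statement's English description precedes it below -/
import Mathlib

section
/- If the distinguished source vertices of w_0 in two distinct directions j_1 and j_2 both exist and both lie in the source set of w_1 (where w_0, w_1 are vertices at the same level), then w_1 = w_0. -/
/-- If the distinguished source vertices of `w₀` in two distinct directions `j₁, j₂`
both exist and both lie in the source set of `w₁` (where `w₀, w₁` are vertices at the
same level), then `w₁ = w₀`. -/
theorem two_dsv_in_source_implies_eq (d q n : ℕ) (hd : 0 < d) (hq : 0 < q)
    (w0 w1 : Fin q → ℕ) (j1 j2 : Fin q) (hjj : j1 ≠ j2)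
    (hj1 : d ≤ w0 j1) (hj2 : d ≤ w0 j2)
    (h0 : ∑ i, w0 i = n * d) (h1 : ∑ i, w1 i = n * d)
    (hA : ∃ s : Fin q → ℕ, ∑ i, s i = d ∧
      (fun i => if i = j1 then w0 i - d else w0 i) + s = w1)
    (hB : ∃ s : Fin q → ℕ, ∑ i, s i = d ∧
      (fun i => if i = j2 then w0 i - d else w0 i) + s = w1) :
    w1 = w0 := by
  obtain ⟨s, hs, hsw⟩ := hA
  obtain ⟨t, ht, htw⟩ := hB
  -- evaluate both at j2
  have e1 : w0 j2 + s j2 = w1 j2 := by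
    have := congrFun hsw j2
    simpa [hjj.symm, if_neg (Ne.symm hjj)] using this
  have e2 : w0 j2 - d + t j2 = w1 j2 := by
    have := congrFun htw j2
    simpa using this
  have htj2 : d ≤ t j2 := by omega
  have hsplit : t j2 + ∑ i ∈ Finset.univ.erase j2, t i = d := by
    rw [Finset.add_sum_erase _ _ (Finset.mem_univ j2)]; exact ht
  have hrest : ∑ i ∈ Finset.univ.erase j2, t i = 0 := by omega
  have htj2' : t j2 = d := by omega
  have hzero : ∀ i, i ≠ j2 → t i = 0 := by
    intro i hi
    have := (Finset.sum_eq_zero_iff.mp hrest) i (by simp [hi])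
    exact this
  funext i
  have := congrFun htw i
  by_cases h : i = j2
  · subst h
    simp only [Pi.add_apply, if_pos rfl] at this
    omega
  · have hz := hzero i h
    simp only [Pi.add_apply, if_neg h] at this
    omega
end

section
/- A vertex w at level n > q ≥ 2 is covered if and only if some coordinate of w exceeds (n-1)d. Equivalently, w is uncovered iff every coordinate of w is at most (n-1)d. -/
/-- The source set of a vertex `w`: vectors `u` with an edge from `u` to `w`. -/
def SourceSet (d q : ℕ) (w : Fin q → ℕ) : Set (Fin q → ℕ) :=
  {u | ∃ s : Fin q → ℕ, ∑ i, s i = d ∧ u + s = w}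

/-- A level-`n` vertex `w` is covered if some other level-`n` vertex `w'` has
`S(w) ⊆ S(w')`. -/
def Covered (d q n : ℕ) (w : Fin q → ℕ) : Prop :=
  ∃ w' : Fin q → ℕ, w' ≠ w ∧ ∑ i, w' i = n * d ∧ SourceSet d q w ⊆ SourceSet d q w'

/-- Greedy lemma: any target `m` below the total sum can be realized by a
pointwise-dominated function supported on `s`. -/
lemma exists_dominated_sum {ι : Type*} [DecidableEq ι] (s : Finset ι) (v : ι → ℕ) :
    ∀ m : ℕ, m ≤ ∑ i ∈ s, v i →
    ∃ u : ι → ℕ, (∀ i ∈ s, u i ≤ v i) ∧ (∀ i ∉ s, u i = 0) ∧ ∑ i ∈ s, u i = m := by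
  induction s using Finset.induction_on with
  | empty =>
    intro m hm
    simp only [Finset.sum_empty, Nat.le_zero] at hm
    exact ⟨0, by simp, by simp, by simp [hm]⟩
  | @insert a t ha ih =>
    intro m hm
    rw [Finset.sum_insert ha] at hm
    have h1 : m - min m (v a) ≤ ∑ i ∈ t, v i := by omega
    obtain ⟨u, hu1, hu2, hu3⟩ := ih (m - min m (v a)) h1
    refine ⟨Function.update u a (min m (v a)), ?_, ?_, ?_⟩
    · intro i hi
      rcases Finset.mem_insert.mp hi with rfl | hi
      · rw [Function.update_self]; omega
      · have : i ≠ a := fun h => ha (h ▸ hi)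
        rw [Function.update_of_ne this]; exact hu1 i hi
    · intro i hi
      have h2 : i ≠ a := fun h => hi (h ▸ Finset.mem_insert_self a t)
      have h3 : i ∉ t := fun h => hi (Finset.mem_insert_of_mem h)
      rw [Function.update_of_ne h2]; exact hu2 i h3
    · rw [Finset.sum_insert ha, Function.update_self]
      have : ∑ i ∈ t, Function.update u a (min m (v a)) i = ∑ i ∈ t, u i :=
        Finset.sum_congr rfl fun i hi =>
          Function.update_of_ne (by rintro rfl; exact ha hi) _ _
      rw [this, hu3]; omega

lemma mem_sourceSet {d q : ℕ} {w u : Fin q → ℕ} (hle : ∀ i, u i ≤ w i)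
    (hsum : ∑ i, u i + d = ∑ i, w i) : u ∈ SourceSet d q w := by
  refine ⟨fun i => w i - u i, ?_, ?_⟩
  · have h : ∑ i, (u i + (w i - u i)) = ∑ i, w i :=
      Finset.sum_congr rfl fun i _ => by have := hle i; omega
    rw [Finset.sum_add_distrib] at h
    show ∑ i, (w i - u i) = d
    omega
  · funext i
    have := hle i
    simp only [Pi.add_apply]
    omega

lemma sourceSet_le {d q : ℕ} {w u : Fin q → ℕ} (hu : u ∈ SourceSet d q w) :
    (∀ i, u i ≤ w i) ∧ ∑ i, u i + d = ∑ i, w i := by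
  obtain ⟨s, hs, hus⟩ := hu
  constructor
  · intro i
    have := congrFun hus i
    simp only [Pi.add_apply] at this
    omega
  · have h : ∑ i, (u i + s i) = ∑ i, w i :=
      Finset.sum_congr rfl fun i _ => congrFun hus i
    rw [Finset.sum_add_distrib] at h
    omega

/-- A vertex `w` at level `n > q ≥ 2` is covered iff some coordinate of `w` exceeds
`(n-1)*d`. -/
theorem covered_iff_large_coordinate (d q n : ℕ) (hd : 0 < d) (hq : 2 ≤ q) (hn : q < n)
    (w : Fin q → ℕ) (hw : ∑ i, w i = n * d) :
    Covered d q n w ↔ ∃ j, (n - 1) * d < w j := by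
  have hn1 : 1 ≤ n := by omega
  have hkey : (n - 1) * d + d = n * d := by
    have : (n - 1) + 1 = n := by omega
    calc (n - 1) * d + d = ((n - 1) + 1) * d := by ring
    _ = n * d := by rw [this]
  constructor
  · rintro ⟨w', hne, hsum', hsub⟩
    by_contra hno
    push_neg at hno
    -- find k with w' k < w k
    have hex : ∃ k, w' k < w k := by
      by_contra h
      push_neg at h
      apply hne
      funext i
      have heq : ∀ i ∈ Finset.univ, w i = w' i := by
        rw [← Finset.sum_eq_sum_iff_of_le (fun i _ => h i)]
        rw [hw, hsum']
      exact (heq i (Finset.mem_univ i)).symm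
    obtain ⟨k, hk⟩ := hex
    have hsplit : w k + ∑ i ∈ Finset.univ.erase k, w i = ∑ i, w i :=
      Finset.add_sum_erase _ w (Finset.mem_univ k)
    have hwk : w k ≤ (n - 1) * d := hno k
    have hm : (n - 1) * d - w k ≤ ∑ i ∈ Finset.univ.erase k, w i := by omega
    obtain ⟨u, hu1, hu2, hu3⟩ :=
      exists_dominated_sum (Finset.univ.erase k) w ((n - 1) * d - w k) hm
    set u' := Function.update u k (w k) with hu'
    have hu'k : u' k = w k := Function.update_self _ _ _
    have hu'ne : ∀ i, i ≠ k → u' i = u i := fun i hi => Function.update_of_ne hi _ _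
    have hle : ∀ i, u' i ≤ w i := by
      intro i
      by_cases h : i = k
      · subst h; rw [hu'k]
      · rw [hu'ne i h]; exact hu1 i (Finset.mem_erase.mpr ⟨h, Finset.mem_univ i⟩)
    have hsumu' : ∑ i, u' i = (n - 1) * d := by
      have hsplit' : u' k + ∑ i ∈ Finset.univ.erase k, u' i = ∑ i, u' i :=
        Finset.add_sum_erase _ u' (Finset.mem_univ k)
      have : ∑ i ∈ Finset.univ.erase k, u' i = ∑ i ∈ Finset.univ.erase k, u i :=
        Finset.sum_congr rfl fun i hi => hu'ne i (Finset.mem_erase.mp hi).1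
      rw [this, hu3] at hsplit'
      omega
    have hmem : u' ∈ SourceSet d q w := mem_sourceSet hle (by rw [hsumu', hw]; omega)
    have hmem' := hsub hmem
    have := (sourceSet_le hmem').1 k
    rw [hu'k] at this
    omega
  · rintro ⟨j, hj⟩
    haveI : Nontrivial (Fin q) := Fin.nontrivial_iff_two_le.mpr hq
    obtain ⟨k, hk⟩ := exists_ne j
    set t := w j - (n - 1) * d with ht
    have htpos : 0 < t := by omega
    set w' := Function.update (Function.update w j ((n - 1) * d)) k (w k + t) with hw'
    have hw'k : w' k = w k + t := Function.update_self _ _ _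
    have hw'j : w' j = (n - 1) * d := by
      rw [hw', Function.update_of_ne (Ne.symm hk), Function.update_self]
    have hw'ne : ∀ i, i ≠ k → i ≠ j → w' i = w i := fun i hik hij => by
      rw [hw', Function.update_of_ne hik, Function.update_of_ne hij]
    have hsum'w : ∑ i, w' i = n * d := by
      have h1 : w' k + ∑ i ∈ Finset.univ.erase k, w' i = ∑ i, w' i :=
        Finset.add_sum_erase _ w' (Finset.mem_univ k)
      have hjk : j ∈ Finset.univ.erase k :=
        Finset.mem_erase.mpr ⟨Ne.symm hk, Finset.mem_univ j⟩
      have h2 : w' j + ∑ i ∈ (Finset.univ.erase k).erase j, w' i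
          = ∑ i ∈ Finset.univ.erase k, w' i :=
        Finset.add_sum_erase _ w' hjk
      have h3 : w k + ∑ i ∈ Finset.univ.erase k, w i = ∑ i, w i :=
        Finset.add_sum_erase _ w (Finset.mem_univ k)
      have h4 : w j + ∑ i ∈ (Finset.univ.erase k).erase j, w i
          = ∑ i ∈ Finset.univ.erase k, w i :=
        Finset.add_sum_erase _ w hjk
      have h5 : ∑ i ∈ (Finset.univ.erase k).erase j, w' i
          = ∑ i ∈ (Finset.univ.erase k).erase j, w i := by
        refine Finset.sum_congr rfl fun i hi => ?_
        obtain ⟨hij, hik⟩ : i ≠ j ∧ i ≠ k := by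
          simp only [Finset.mem_erase, Finset.mem_univ, and_true] at hi
          exact ⟨hi.1, hi.2⟩
        exact hw'ne i hik hij
      rw [hw] at h3
      rw [hw'k, hw'j] at *
      omega
    refine ⟨w', ?_, hsum'w, ?_⟩
    · intro h
      have := congrFun h j
      rw [hw'j] at this
      omega
    · intro u hu
      obtain ⟨hle, hsumu⟩ := sourceSet_le hu
      rw [hw] at hsumu
      have huj : u j ≤ ∑ i, u i :=
        Finset.single_le_sum (fun i _ => Nat.zero_le (u i)) (Finset.mem_univ j)
      have hle' : ∀ i, u i ≤ w' i := by
        intro i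
        by_cases h1 : i = k
        · subst h1; rw [hw'k]; exact le_trans (hle i) (Nat.le_add_right _ _)
        by_cases h2 : i = j
        · subst h2; rw [hw'j]; omega
        · rw [hw'ne i h1 h2]; exact hle i
      exact mem_sourceSet hle' (by rw [hsum'w]; omega)
end

section
/- Let z be a level-(n+1) vertex and j a coordinate with d ≤ z(j) ≤ nd. Then there exist vertices w_0, w_1, ..., w_d in the source set of z such that w_ℓ(j) = z(j) - ℓ for each ℓ = 0, 1, ..., d. -/
lemma aux_distribute {α : Type*} [DecidableEq α] (t : Finset α) (f : α → ℕ) (m : ℕ)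
    (hm : m ≤ ∑ i ∈ t, f i) :
    ∃ g : α → ℕ, (∀ i, g i ≤ f i) ∧ (∀ i ∉ t, g i = 0) ∧ ∑ i ∈ t, g i = m := by
  induction t using Finset.induction_on generalizing m with
  | empty =>
      simp only [Finset.sum_empty, Nat.le_zero] at hm
      exact ⟨fun _ => 0, fun i => Nat.zero_le _, fun i _ => rfl, by simp [hm]⟩
  | @insert a t ha ih =>
      rw [Finset.sum_insert ha] at hm
      have h2 : m - min m (f a) ≤ ∑ i ∈ t, f i := by omega
      obtain ⟨g, hg1, hg2, hg3⟩ := ih _ h2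
      refine ⟨Function.update g a (min m (f a)), ?_, ?_, ?_⟩
      · intro i
        rcases eq_or_ne i a with rfl | h
        · simp [Function.update_self]
        · simp [Function.update_of_ne h, hg1 i]
      · intro i hi
        have hia : i ≠ a := fun h => hi (h ▸ Finset.mem_insert_self a t)
        rw [Function.update_of_ne hia]
        exact hg2 i (fun h => hi (Finset.mem_insert_of_mem h))
      · rw [Finset.sum_insert ha, Function.update_self]
        have : ∑ x ∈ t, Function.update g a (m ⊓ f a) x = ∑ x ∈ t, g x :=
          Finset.sum_congr rfl (by intro i hi; exact Function.update_of_ne (by rintro rfl; exact ha hi) _ _)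
        rw [this, hg3]
        omega

/-- Let `z` be a level-`(n+1)` vertex and `j` a coordinate with `d ≤ z j ≤ n*d`.
Then for each `ℓ = 0, 1, …, d` there is a vertex `w` in the source set of `z` with
`w j = z j - ℓ`. -/
theorem source_set_coordinate_range (d q n : ℕ) (hd : 0 < d) (hq : 2 ≤ q) (hn : 1 ≤ n)
    (z : Fin q → ℕ) (j : Fin q)
    (hz : ∑ i, z i = (n + 1) * d)
    (hj1 : d ≤ z j) (hj2 : z j ≤ n * d) :
    ∀ l ≤ d, ∃ w : Fin q → ℕ,
      (∃ s : Fin q → ℕ, ∑ i, s i = d ∧ w + s = z) ∧ w j = z j - l := by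
  intro l hl
  have hsum_erase : ∑ i ∈ Finset.univ.erase j, z i = (n + 1) * d - z j := by
    have := Finset.add_sum_erase Finset.univ z (Finset.mem_univ j)
    omega
  have hzj : z j ≤ (n + 1) * d := le_trans hj2 (by nlinarith)
  have hle : d - l ≤ ∑ i ∈ Finset.univ.erase j, z i := by
    rw [hsum_erase]
    have : d ≤ (n + 1) * d - z j := by
      have : z j + d ≤ (n + 1) * d := by nlinarith
      omega
    omega
  obtain ⟨g, hg1, hg2, hg3⟩ := aux_distribute (Finset.univ.erase j) z (d - l) hle
  set s : Fin q → ℕ := Function.update g j l with hs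
  have hsj : s j = l := Function.update_self _ _ _
  have hsle : ∀ i, s i ≤ z i := by
    intro i
    rcases eq_or_ne i j with rfl | h
    · rw [hsj]; omega
    · rw [hs, Function.update_of_ne h]; exact hg1 i
  have hsum : ∑ i, s i = d := by
    rw [← Finset.add_sum_erase Finset.univ s (Finset.mem_univ j), hsj]
    rw [Finset.sum_congr rfl
      (fun i hi => Function.update_of_ne (Finset.ne_of_mem_erase hi) _ _), hg3]
    omega
  refine ⟨fun i => z i - s i, ⟨s, hsum, ?_⟩, by simp [hsj]⟩
  funext i
  have := hsle i
  simp only [Pi.add_apply]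
  omega
end

section
/- If a level-n vertex w (n > q ≥ 2) satisfies w(j) > (n-1)d for some j, then c(w) := d - ∑_{i≠j} w(i) lies in [1, d], and for any b ∈ [1, c(w)] and any vector σ with σ(j) = -b, σ(i) ≥ 0 for i ≠ j, and ∑_{i≠j} σ(i) = b, the vertex w' = w + σ covers w, i.e., S(w) ⊆ S(w'). -/
/-- If a level-`n` vertex `w` (with `n > q ≥ 2`) satisfies `w j > (n-1)*d` for some
`j`, then `c(w) = d - ∑_{i≠j} w i` lies in `[1,d]`, and for any `b ∈ [1, c(w)]` and
any integer vector `σ` with `σ j = -b`, `σ i ≥ 0` for `i ≠ j`, and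
`∑_{i≠j} σ i = b`, the vertex `w' = w + σ` covers `w`: `S(w) ⊆ S(w')`. -/
theorem covering_vertices (d q n : ℕ) (hd : 0 < d) (hq : 2 ≤ q) (hn : q < n)
    (w : Fin q → ℕ) (j : Fin q)
    (hw : ∑ i, w i = n * d) (hj : (n - 1) * d < w j)
    (sg : Fin q → ℤ) (b : ℤ)
    (hb1 : 1 ≤ b)
    (hb2 : b ≤ (d : ℤ) - ∑ i ∈ Finset.univ.erase j, (w i : ℤ))
    (hsgj : sg j = -b)
    (hsgpos : ∀ i, i ≠ j → 0 ≤ sg i)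
    (hsgsum : ∑ i ∈ Finset.univ.erase j, sg i = b)
    (w' : Fin q → ℕ)
    (hw' : ∀ i, (w' i : ℤ) = (w i : ℤ) + sg i) :
    (1 ≤ (d : ℤ) - ∑ i ∈ Finset.univ.erase j, (w i : ℤ)) ∧
      ((d : ℤ) - ∑ i ∈ Finset.univ.erase j, (w i : ℤ)) ≤ (d : ℤ) ∧
      SourceSet d q w ⊆ SourceSet d q w' := by
  have hwnn : 0 ≤ ∑ i ∈ Finset.univ.erase j, (w i : ℤ) :=
    Finset.sum_nonneg fun i _ => Int.natCast_nonneg _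
  refine ⟨by linarith, by linarith, ?_⟩
  rintro u ⟨s, hs, hus⟩
  have hle : ∀ i, s i ≤ w i := by
    intro i
    have := congrFun hus i
    simp only [Pi.add_apply] at this
    omega
  have hsZ : ∑ i, (s i : ℤ) = (d : ℤ) := by exact_mod_cast hs
  have hsplit : (s j : ℤ) + ∑ i ∈ Finset.univ.erase j, (s i : ℤ) = (d : ℤ) := by
    rw [← hsZ]; exact Finset.add_sum_erase _ (fun i => (s i : ℤ)) (Finset.mem_univ j)
  have hsumle : ∑ i ∈ Finset.univ.erase j, (s i : ℤ) ≤
      ∑ i ∈ Finset.univ.erase j, (w i : ℤ) :=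
    Finset.sum_le_sum fun i _ => by exact_mod_cast hle i
  have hsjb : b ≤ (s j : ℤ) := by linarith
  have hnn : ∀ i, 0 ≤ (s i : ℤ) + sg i := by
    intro i
    by_cases h : i = j
    · subst h; rw [hsgj]; linarith
    · have := hsgpos i h
      have : (0:ℤ) ≤ (s i : ℤ) := Int.natCast_nonneg _
      linarith [hsgpos i h]
  refine ⟨fun i => ((s i : ℤ) + sg i).toNat, ?_, ?_⟩
  · have hcast : ∀ i, ((((s i : ℤ) + sg i).toNat : ℤ)) = (s i : ℤ) + sg i :=
      fun i => Int.toNat_of_nonneg (hnn i)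
    have : ∑ i, (((s i : ℤ) + sg i).toNat : ℤ) = (d : ℤ) := by
      simp only [hcast]
      rw [Finset.sum_add_distrib, hsZ]
      have : ∑ i, sg i = 0 := by
        rw [← Finset.add_sum_erase Finset.univ sg (Finset.mem_univ j), hsgj, hsgsum]
        ring
      rw [this]; ring
    exact_mod_cast this
  · funext i
    have : ((u i + ((s i : ℤ) + sg i).toNat : ℕ) : ℤ) = (w' i : ℤ) := by
      push_cast [Int.toNat_of_nonneg (hnn i)]
      have := congrFun hus i
      simp only [Pi.add_apply] at this
      have huw : (u i : ℤ) + (s i : ℤ) = (w i : ℤ) := by exact_mod_cast this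
      rw [hw' i]; linarith
    exact_mod_cast this
end

section
/- In a connected Bratteli diagram in which every vertex has at least two outgoing edges, for every edge ordering the set of infinite paths that eventually follow only minimal edges is meager in the path space. -/
/-!
Write `F N` for the set of paths whose edges at all levels `≥ N` are minimal; the set in
question is `⋃ N, F N`. Each `F N` is closed, being cut out by conditions on single
coordinates. It has empty interior: from any vertex there is a finite path ending in a
non-minimal edge. Indeed, take two distinct edges `e₁ ≠ e₂` leaving the vertex and follow
their targets to a common descendant; at the last level where the two paths still differ
they enter the same vertex through distinct edges, and one of those is not minimal. Hence
every cylinder around a path contains a path leaving `F N`.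
-/

/-- The path space of a Bratteli diagram: infinite sequences of edges, one per
level, with consecutive edges compatible. -/
abbrev BVPath (V E : ℕ → Type) (src : ∀ n, E n → V n) (tgt : ∀ n, E n → V (n + 1)) :
    Type :=
  {x : ∀ n, E n // ∀ n, tgt n (x n) = src (n + 1) (x (n + 1))}

open Function PiNat Topology

theorem dense_of_forall_exists_mem_cylinder {E : ℕ → Type*} [∀ n, TopologicalSpace (E n)]
    [∀ n, DiscreteTopology (E n)] {S : Set (∀ n, E n)} {A : Set S}
    (h : ∀ (x : S) n, ∃ y ∈ A, (y : ∀ n, E n) ∈ cylinder x n) : Dense A := by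
  rw [((isTopologicalBasis_cylinders E).isInducing IsInducing.subtypeVal).dense_iff]
  rintro _ ⟨_, ⟨z, n, rfl⟩, rfl⟩ ⟨x, hx⟩
  obtain ⟨y, hyA, hy⟩ := h x n
  exact ⟨y, mem_cylinder_iff_eq.1 hx ▸ hy, hyA⟩

namespace Bratteli

variable {V E : ℕ → Type} {src : ∀ n, E n → V n} {tgt : ∀ n, E n → V (n + 1)}

/-- The edges of `q` at the levels `a, …, b` (both included) form a finite path. -/
def IsPathSegment (src : ∀ n, E n → V n) (tgt : ∀ n, E n → V (n + 1)) (q : ∀ n, E n)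
    (a b : ℕ) : Prop :=
  ∀ k, a ≤ k → k < b → tgt k (q k) = src (k + 1) (q (k + 1))

def IsMinimalEdge (tgt : ∀ n, E n → V (n + 1)) (ξ : ∀ n, E n → ℕ) (n : ℕ) (e : E n) :
    Prop :=
  ∀ e', tgt n e' = tgt n e → ξ n e ≤ ξ n e'

/-- `v₁` and `v₂` reach a common vertex at level `b + 1` along two path segments with edges
at the levels `n, …, b`. -/
def HaveCommonDescendant (src : ∀ n, E n → V n) (tgt : ∀ n, E n → V (n + 1)) (n : ℕ)
    (v₁ v₂ : V n) : Prop :=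
  ∃ b, n ≤ b ∧ ∃ p₁ p₂ : ∀ k, E k, src n (p₁ n) = v₁ ∧ src n (p₂ n) = v₂ ∧
    IsPathSegment src tgt p₁ n b ∧ IsPathSegment src tgt p₂ n b ∧
    tgt b (p₁ b) = tgt b (p₂ b)

def pathsMinimalFrom (src : ∀ n, E n → V n) (tgt : ∀ n, E n → V (n + 1))
    (ξ : ∀ n, E n → ℕ) (N : ℕ) : Set (BVPath V E src tgt) :=
  {x | ∀ k ≥ N, IsMinimalEdge tgt ξ k (x.1 k)}

namespace IsPathSegment

variable {q : ∀ n, E n} {a b : ℕ}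

theorem mono_left (h : IsPathSegment src tgt q a b) {c : ℕ} (hac : a ≤ c) :
    IsPathSegment src tgt q c b :=
  fun k hck hkb => h k (hac.trans hck) hkb

theorem mono_right (h : IsPathSegment src tgt q a b) {c : ℕ} (hcb : c ≤ b) :
    IsPathSegment src tgt q a c :=
  fun k hak hkc => h k hak (hkc.trans_le hcb)

theorem cons (h : IsPathSegment src tgt q (a + 1) b) {e : E a}
    (he : tgt a e = src (a + 1) (q (a + 1))) : IsPathSegment src tgt (update q a e) a b := by
  intro k hak hkb
  rcases hak.eq_or_lt with rfl | hlt
  · rwa [update_self, update_of_ne (by omega)]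
  · rw [update_of_ne hlt.ne', update_of_ne (by omega)]
    exact h k hlt hkb

theorem append {x : ∀ n, E n} {L : ℕ} (hx : IsPathSegment src tgt x a L)
    (hq : IsPathSegment src tgt q (L + 1) b) (hjoin : tgt L (x L) = src (L + 1) (q (L + 1))) :
    IsPathSegment src tgt (fun k => if k ≤ L then x k else q k) a b := by
  intro k hak hkb
  rcases lt_trichotomy k L with hk | rfl | hk
  · simp only [if_pos hk.le, if_pos (show k + 1 ≤ L by omega)]
    exact hx k hak hk
  · simp only [le_refl, if_true, if_neg (show ¬k + 1 ≤ k by omega)]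
    exact hjoin
  · simp only [if_neg (show ¬k ≤ L by omega), if_neg (show ¬k + 1 ≤ L by omega)]
    exact hq k hk hkb

theorem exists_ne_of_tgt_eq {q' : ∀ n, E n} (h : IsPathSegment src tgt q a b)
    (h' : IsPathSegment src tgt q' a b) (hab : a ≤ b) (hne : q a ≠ q' a)
    (htgt : tgt b (q b) = tgt b (q' b)) :
    ∃ j, a ≤ j ∧ j ≤ b ∧ q j ≠ q' j ∧ tgt j (q j) = tgt j (q' j) := by
  obtain ⟨d, rfl⟩ := Nat.exists_eq_add_of_le hab
  clear hab
  induction d generalizing a with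
  | zero => exact ⟨a, le_rfl, le_rfl, hne, htgt⟩
  | succ d ih =>
    by_cases hnext : q (a + 1) = q' (a + 1)
    · refine ⟨a, le_rfl, by omega, hne, ?_⟩
      rw [h a le_rfl (by omega), h' a le_rfl (by omega), hnext]
    · rw [show a + (d + 1) = a + 1 + d by omega] at h h' htgt
      obtain ⟨j, haj, hjb, hj⟩ := ih hnext (h.mono_left a.le_succ) (h'.mono_left a.le_succ) htgt
      exact ⟨j, by omega, by omega, hj⟩

theorem exists_bvPath (hout : ∀ n (v : V n), ∃ e, src n e = v)
    (hq : IsPathSegment src tgt q 0 b) : ∃ y : BVPath V E src tgt, ∀ k ≤ b, y.1 k = q k := by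
  choose out hout using hout
  let y : ∀ n, E n := fun n => Nat.rec (motive := E) (q 0)
    (fun n yn => if n + 1 ≤ b then q (n + 1) else out (n + 1) (tgt n yn)) n
  have hy : ∀ k ≤ b, y k = q k := by
    rintro (_ | k) hk
    · rfl
    · exact if_pos hk
  refine ⟨⟨y, fun n => ?_⟩, hy⟩
  by_cases hn : n + 1 ≤ b
  · rw [hy n (by omega), hy (n + 1) hn]
    exact hq n n.zero_le hn
  · change _ = src (n + 1) (if n + 1 ≤ b then q (n + 1) else out (n + 1) (tgt n (y n)))
    rw [if_neg hn, hout]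

end IsPathSegment

theorem BVPath.isPathSegment (x : BVPath V E src tgt) (a b : ℕ) :
    IsPathSegment src tgt x.1 a b :=
  fun k _ _ => x.2 k

variable {ξ : ∀ n, E n → ℕ}

theorem not_isMinimalEdge_or_not_isMinimalEdge {n : ℕ} {f₁ f₂ : E n}
    (hinj : Set.InjOn (ξ n) {e | tgt n e = tgt n f₁}) (hne : f₁ ≠ f₂)
    (htgt : tgt n f₁ = tgt n f₂) : ¬IsMinimalEdge tgt ξ n f₁ ∨ ¬IsMinimalEdge tgt ξ n f₂ := by
  by_contra! h
  exact hne (hinj rfl htgt.symm ((h.1 f₂ htgt.symm).antisymm (h.2 f₁ htgt)))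

theorem exists_isPathSegment_not_isMinimalEdge
    (hout : ∀ n (v : V n), ∃ e e' : E n, e ≠ e' ∧ src n e = v ∧ src n e' = v)
    (hconn : ∀ n (v₁ v₂ : V n), HaveCommonDescendant src tgt n v₁ v₂)
    (hinj : ∀ n (w : V (n + 1)), Set.InjOn (ξ n) {e | tgt n e = w}) (M : ℕ) (w : V M) :
    ∃ j ≥ M, ∃ q : ∀ n, E n, src M (q M) = w ∧ IsPathSegment src tgt q M j ∧
      ¬IsMinimalEdge tgt ξ j (q j) := by
  obtain ⟨e₁, e₂, hne, he₁, he₂⟩ := hout M w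
  obtain ⟨b, hb, p₁, p₂, hp₁, hp₂, hs₁, hs₂, hmerge⟩ := hconn (M + 1) (tgt M e₁) (tgt M e₂)
  have hq₁ := hs₁.cons hp₁.symm
  have hq₂ := hs₂.cons hp₂.symm
  obtain ⟨j, hMj, hjb, hne, htgt⟩ := hq₁.exists_ne_of_tgt_eq hq₂ (by omega)
    (by simpa only [update_self] using hne)
    (by simpa only [update_of_ne (show b ≠ M by omega)] using hmerge)
  rcases not_isMinimalEdge_or_not_isMinimalEdge (hinj j _) hne htgt with h | h
  · exact ⟨j, hMj, _, by rwa [update_self], hq₁.mono_right hjb, h⟩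
  · exact ⟨j, hMj, _, by rwa [update_self], hq₂.mono_right hjb, h⟩

section Topology

variable [∀ n, TopologicalSpace (E n)] [∀ n, DiscreteTopology (E n)]

theorem isClosed_pathsMinimalFrom (N : ℕ) : IsClosed (pathsMinimalFrom src tgt ξ N) := by
  simp only [pathsMinimalFrom, Set.ofPred_forall]
  exact isClosed_iInter fun k => isClosed_iInter fun _ =>
    (isClosed_discrete {e | IsMinimalEdge tgt ξ k e}).preimage
      ((continuous_apply k).comp continuous_subtype_val)

theorem dense_compl_pathsMinimalFrom
    (hout : ∀ n (v : V n), ∃ e e' : E n, e ≠ e' ∧ src n e = v ∧ src n e' = v)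
    (hconn : ∀ n (v₁ v₂ : V n), HaveCommonDescendant src tgt n v₁ v₂)
    (hinj : ∀ n (w : V (n + 1)), Set.InjOn (ξ n) {e | tgt n e = w}) (N : ℕ) :
    Dense (pathsMinimalFrom src tgt ξ N)ᶜ := by
  refine dense_of_forall_exists_mem_cylinder fun x n => ?_
  set L := max N n
  obtain ⟨j, hLj, q, hq₀, hq, hqj⟩ :=
    exists_isPathSegment_not_isMinimalEdge hout hconn hinj (L + 1) (tgt L (x.1 L))
  obtain ⟨y, hy⟩ := ((BVPath.isPathSegment x 0 L).append hq hq₀.symm).exists_bvPath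
    fun n v => (hout n v).imp fun _ ⟨_, _, he, _⟩ => he
  refine ⟨y, fun hyN => hqj ?_, mem_cylinder_iff.2 fun i hi => ?_⟩
  · have hyj := hyN j (by omega)
    rwa [hy j le_rfl, if_neg (by omega)] at hyj
  · rw [hy i (by omega), if_pos (by omega)]

end Topology

end Bratteli

open Bratteli

theorem eventually_minimal_paths_meager_general
    (V E : ℕ → Type)
    [∀ n, TopologicalSpace (E n)] [∀ n, DiscreteTopology (E n)]
    (src : ∀ n, E n → V n) (tgt : ∀ n, E n → V (n + 1))
    -- every vertex has at least two outgoing edges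
    (hout : ∀ n (v : V n), ∃ e e' : E n, e ≠ e' ∧ src n e = v ∧ src n e' = v)
    -- connectedness
    (hconn : ∀ n (v₁ v₂ : V n), ∃ m, n < m ∧ ∃ p₁ p₂ : ∀ k, E k,
      src n (p₁ n) = v₁ ∧ src n (p₂ n) = v₂ ∧
      (∀ k, n ≤ k → k + 1 < m → tgt k (p₁ k) = src (k + 1) (p₁ (k + 1))) ∧
      (∀ k, n ≤ k → k + 1 < m → tgt k (p₂ k) = src (k + 1) (p₂ (k + 1))) ∧
      tgt (m - 1) (p₁ (m - 1)) = tgt (m - 1) (p₂ (m - 1)))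
    -- an edge ordering: on the set of edges into each vertex, `ξ` is a bijection
    -- onto `{1, …, #edges into that vertex}`
    (ξ : ∀ n, E n → ℕ)
    (hξ : ∀ n (w : V (n + 1)),
      Set.BijOn (ξ n) {e : E n | tgt n e = w}
        (Set.Icc 1 (Nat.card {e : E n // tgt n e = w}))) :
    IsMeagre {x : BVPath V E src tgt |
      ∃ N, ∀ k ≥ N, ∀ e' : E k, tgt k e' = tgt k (x.1 k) → ξ k (x.1 k) ≤ ξ k e'} := by
  have hcommon : ∀ n (v₁ v₂ : V n), HaveCommonDescendant src tgt n v₁ v₂ := fun n v₁ v₂ => by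
    obtain ⟨m, hnm, p₁, p₂, h₁, h₂, hs₁, hs₂, hmerge⟩ := hconn n v₁ v₂
    exact ⟨m - 1, by omega, p₁, p₂, h₁, h₂, fun k hk _ => hs₁ k hk (by omega),
      fun k hk _ => hs₂ k hk (by omega), hmerge⟩
  have hunion : {x : BVPath V E src tgt |
      ∃ N, ∀ k ≥ N, ∀ e' : E k, tgt k e' = tgt k (x.1 k) → ξ k (x.1 k) ≤ ξ k e'} =
      ⋃ N, pathsMinimalFrom src tgt ξ N :=
    Set.ofPred_exists _
  rw [hunion]
  refine isMeagre_iUnion fun N => IsNowhereDense.isMeagre ?_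
  rw [(isClosed_pathsMinimalFrom N).isNowhereDense_iff, interior_eq_empty_iff_dense_compl]
  exact dense_compl_pathsMinimalFrom hout hcommon (fun n w => (hξ n w).injOn) N

/-- In a connected Bratteli diagram in which every vertex has at least two outgoing
edges, for every edge ordering the set of infinite paths that eventually follow only
minimal edges is meager in the path space. -/
theorem eventually_minimal_paths_meager
    (V E : ℕ → Type)
    [∀ n, Fintype (V n)] [∀ n, Fintype (E n)] [∀ n, Nonempty (E n)]
    [∀ n, TopologicalSpace (E n)] [∀ n, DiscreteTopology (E n)]
    (src : ∀ n, E n → V n) (tgt : ∀ n, E n → V (n + 1))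
    -- every vertex has at least two outgoing edges
    (hout : ∀ n (v : V n), ∃ e e' : E n, e ≠ e' ∧ src n e = v ∧ src n e' = v)
    -- every vertex after the root has at least one incoming edge
    (hin : ∀ n (v : V (n + 1)), ∃ e : E n, tgt n e = v)
    -- connectedness
    (hconn : ∀ n (v₁ v₂ : V n), ∃ m, n < m ∧ ∃ p₁ p₂ : ∀ k, E k,
      src n (p₁ n) = v₁ ∧ src n (p₂ n) = v₂ ∧
      (∀ k, n ≤ k → k + 1 < m → tgt k (p₁ k) = src (k + 1) (p₁ (k + 1))) ∧
      (∀ k, n ≤ k → k + 1 < m → tgt k (p₂ k) = src (k + 1) (p₂ (k + 1))) ∧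
      tgt (m - 1) (p₁ (m - 1)) = tgt (m - 1) (p₂ (m - 1)))
    -- an edge ordering: on the set of edges into each vertex, `ξ` is a bijection
    -- onto `{1, …, #edges into that vertex}`
    (ξ : ∀ n, E n → ℕ)
    (hξ : ∀ n (w : V (n + 1)),
      Set.BijOn (ξ n) {e : E n | tgt n e = w}
        (Set.Icc 1 (Nat.card {e : E n // tgt n e = w}))) :
    IsMeagre {x : BVPath V E src tgt |
      ∃ N, ∀ k ≥ N, ∀ e' : E k, tgt k e' = tgt k (x.1 k) → ξ k (x.1 k) ≤ ξ k e'} :=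
  eventually_minimal_paths_meager_general V E src tgt hout hconn ξ hξ
end

section
/- In a polynomial shape diagram (with all multiplicities 1), any level-n vertex that is not of the form nd·e_i for some i (i.e., has at least two nonzero coordinates) has at least n distinct minimal-shape paths from the root; formally, dim(v) ≥ n where dim(v) is the number of paths from the root to v. -/
/-- Number of downward edge-paths from the root (the zero vector at level `0`) to a
vertex `v` at level `n` in the polynomial diagram with all coefficients `1`:
at each step one subtracts a nonnegative vector of coordinate sum `d`. -/
def polyDim (d q : ℕ) : ℕ → (Fin q → ℕ) → ℕ
  | 0, v => if v = 0 then 1 else 0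
  | n + 1, v =>
      ∑ s ∈ Finset.Nat.antidiagonalTuple q d,
        if ∀ i, s i ≤ v i then polyDim d q n (fun i => v i - s i) else 0

lemma erase_split (q : ℕ) (f : Fin q → ℕ) (c : Fin q) :
    f c + ∑ k ∈ Finset.univ.erase c, f k = ∑ k, f k :=
  Finset.add_sum_erase _ f (Finset.mem_univ c)

lemma exists_le_sum_eq (q d : ℕ) (v : Fin q → ℕ) (h : d ≤ ∑ i, v i) :
    ∃ s : Fin q → ℕ, (∀ i, s i ≤ v i) ∧ ∑ i, s i = d := by
  induction d generalizing v with
  | zero => exact ⟨0, fun i => Nat.zero_le _, by simp⟩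
  | succ d ih =>
    have hpos : ∃ i, 0 < v i := by
      by_contra h0
      push_neg at h0
      have : ∑ i, v i = 0 := Finset.sum_eq_zero (fun i _ => Nat.le_zero.mp (h0 i))
      omega
    obtain ⟨i, hi⟩ := hpos
    have hmem : i ∈ (Finset.univ : Finset (Fin q)) := Finset.mem_univ i
    have hsplit := erase_split q v i
    have hsum : ∑ k, Function.update v i (v i - 1) k = ∑ k, v k - 1 := by
      rw [Finset.sum_update_of_mem hmem, ← Finset.erase_eq]
      omega
    obtain ⟨s, hs1, hs2⟩ := ih (Function.update v i (v i - 1)) (by omega)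
    refine ⟨Function.update s i (s i + 1), fun k => ?_, ?_⟩
    · by_cases hk : k = i
      · subst hk
        have := hs1 k
        simp only [Function.update_self] at this ⊢
        omega
      · simp only [Function.update_of_ne hk]
        have := hs1 k
        simpa [Function.update_of_ne hk] using this
    · rw [Finset.sum_update_of_mem hmem, ← Finset.erase_eq]
      have := erase_split q s i
      omega

lemma sum_sub_add (q : ℕ) (v s : Fin q → ℕ) (h : ∀ i, s i ≤ v i) :
    ∑ i, (v i - s i) + ∑ i, s i = ∑ i, v i := by
  rw [← Finset.sum_add_distrib]
  exact Finset.sum_congr rfl (fun i _ => Nat.sub_add_cancel (h i))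

lemma polyDim_pos (d q n : ℕ) (v : Fin q → ℕ) (hv : ∑ i, v i = n * d) :
    1 ≤ polyDim d q n v := by
  induction n generalizing v with
  | zero =>
    have hv0 : v = 0 := by
      funext i
      have h0 : ∑ i, v i = 0 := by simpa using hv
      have := Finset.sum_eq_zero_iff.mp h0 i (Finset.mem_univ i)
      simpa using this
    simp [polyDim, hv0]
  | succ n ih =>
    obtain ⟨s, hs1, hs2⟩ := exists_le_sum_eq q d v (by rw [hv]; nlinarith)
    have hmem : s ∈ Finset.Nat.antidiagonalTuple q d := by
      rw [Finset.Nat.mem_antidiagonalTuple]; exact hs2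
    have hterm : 1 ≤ (if ∀ i, s i ≤ v i then polyDim d q n (fun i => v i - s i) else 0) := by
      rw [if_pos hs1]
      refine ih _ ?_
      have := sum_sub_add q v s hs1
      have h1 : (n + 1) * d = n * d + d := by ring
      omega
    calc 1 ≤ _ := hterm
      _ ≤ _ := Finset.single_le_sum
        (f := fun s => if ∀ i, s i ≤ v i then polyDim d q n (fun i => v i - s i) else 0)
        (fun _ _ => Nat.zero_le _) hmem

lemma pair_le_sum {α : Type*} [DecidableEq α] {S : Finset α} (f : α → ℕ) {a b : α}
    (ha : a ∈ S) (hb : b ∈ S) (hab : a ≠ b) : f a + f b ≤ ∑ x ∈ S, f x := by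
  rw [← Finset.sum_pair hab]
  exact Finset.sum_le_sum_of_subset (by simp [Finset.insert_subset_iff, ha, hb])

lemma step_case (d q n : ℕ) (hd : 0 < d) (hn : 1 ≤ n) (v : Fin q → ℕ)
    (hv : ∑ i, v i = (n + 1) * d) (c : Fin q) (hc : 0 < v c) (hlt : v c < n * d)
    (IH : ∀ w : Fin q → ℕ, ∑ i, w i = n * d → (∃ i j, i ≠ j ∧ 0 < w i ∧ 0 < w j) →
      n ≤ polyDim d q n w) :
    n + 1 ≤ polyDim d q (n + 1) v := by
  have hnd : (n + 1) * d = n * d + d := by ring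
  have hv' : ∑ i, v i = n * d + d := by rw [hv, hnd]
  set w : Fin q → ℕ := Function.update v c 0 with hw
  have hmemc : c ∈ (Finset.univ : Finset (Fin q)) := Finset.mem_univ c
  have hsplitv := erase_split q v c
  have hsumw : ∑ k, w k = ∑ k, v k - v c := by
    rw [hw, Finset.sum_update_of_mem hmemc, ← Finset.erase_eq]
    omega
  have hwle : ∀ k, w k ≤ v k := by
    intro k
    by_cases hk : k = c
    · subst hk; simp [hw]
    · simp [hw, Function.update_of_ne hk]
  -- first step vector s, avoiding c
  obtain ⟨s, hs1, hs2⟩ := exists_le_sum_eq q d w (by omega)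
  have hsc : s c = 0 := by
    have := hs1 c
    simp [hw] at this
    exact this
  have hsv : ∀ k, s k ≤ v k := fun k => le_trans (hs1 k) (hwle k)
  -- second step vector s', with s' c = min d (v c) > 0
  set m := min d (v c) with hm
  have hm1 : m ≤ d := min_le_left _ _
  have hm2 : m ≤ v c := min_le_right _ _
  have hm3 : 0 < m := lt_min hd hc
  obtain ⟨t, ht1, ht2⟩ := exists_le_sum_eq q (d - m) w (by omega)
  have htc : t c = 0 := by
    have := ht1 c
    simp [hw] at this
    exact this
  set s' : Fin q → ℕ := Function.update t c m with hs'
  have hs'v : ∀ k, s' k ≤ v k := by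
    intro k
    by_cases hk : k = c
    · subst hk; simp [hs', hm2]
    · simp only [hs', Function.update_of_ne hk]
      exact le_trans (ht1 k) (hwle k)
  have hs'sum : ∑ k, s' k = d := by
    rw [hs', Finset.sum_update_of_mem hmemc, ← Finset.erase_eq]
    have := erase_split q t c
    omega
  have hs'c : 0 < s' c := by
    simp only [hs', Function.update_self]
    omega
  have hne : s ≠ s' := by
    intro h
    have := congrFun h c
    omega
  have hmems : s ∈ Finset.Nat.antidiagonalTuple q d := by
    rw [Finset.Nat.mem_antidiagonalTuple]; exact hs2
  have hmems' : s' ∈ Finset.Nat.antidiagonalTuple q d := by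
    rw [Finset.Nat.mem_antidiagonalTuple]; exact hs'sum
  have hsub : ∑ i, (v i - s i) = n * d := by
    have := sum_sub_add q v s hsv
    omega
  have hsub' : ∑ i, (v i - s' i) = n * d := by
    have := sum_sub_add q v s' hs'v
    omega
  have hterm1 : n ≤ polyDim d q n (fun i => v i - s i) := by
    refine IH _ hsub ?_
    have h1 : (v c - s c) + ∑ k ∈ Finset.univ.erase c, (v k - s k)
        = ∑ k, (v k - s k) := erase_split q (fun k => v k - s k) c
    have hrest : 0 < ∑ k ∈ Finset.univ.erase c, (v k - s k) := by omega
    obtain ⟨k, hk1, hk2⟩ := Finset.exists_ne_zero_of_sum_ne_zero (by omega :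
      ∑ k ∈ Finset.univ.erase c, (v k - s k) ≠ 0)
    have hkc : k ≠ c := (Finset.mem_erase.mp hk1).1
    exact ⟨c, k, fun h => hkc h.symm, by omega, by omega⟩
  have hterm2 : 1 ≤ polyDim d q n (fun i => v i - s' i) := polyDim_pos d q n _ hsub'
  have hfinal :
      (if ∀ i, s i ≤ v i then polyDim d q n (fun i => v i - s i) else 0)
      + (if ∀ i, s' i ≤ v i then polyDim d q n (fun i => v i - s' i) else 0)
      ≤ polyDim d q (n + 1) v :=
    pair_le_sum (f := fun x => if ∀ i, x i ≤ v i then polyDim d q n (fun i => v i - x i) else 0)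
      hmems hmems' hne
  rw [if_pos hsv, if_pos hs'v] at hfinal
  omega

/-- In a polynomial diagram with all multiplicities 1, any level-`n` vertex with at
least two strictly positive coordinates has at least `n` paths from the root. -/
theorem polyDim_ge_of_not_extreme (d q n : ℕ) (hd : 0 < d) (hq : 2 ≤ q) (hn : 1 ≤ n)
    (v : Fin q → ℕ) (hv : ∑ i, v i = n * d)
    (h2 : ∃ i j, i ≠ j ∧ 0 < v i ∧ 0 < v j) :
    n ≤ polyDim d q n v := by
  induction n, hn using Nat.le_induction generalizing v with
  | base =>
    have hmem : v ∈ Finset.Nat.antidiagonalTuple q d := by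
      rw [Finset.Nat.mem_antidiagonalTuple]; omega
    have hterm : 1 ≤ (if ∀ i, v i ≤ v i then polyDim d q 0 (fun i => v i - v i) else 0) := by
      rw [if_pos (fun i => le_refl _)]
      have h0 : (fun i => v i - v i) = (0 : Fin q → ℕ) := by funext i; simp
      rw [h0]
      simp [polyDim]
    calc (1:ℕ) ≤ _ := hterm
      _ ≤ _ := Finset.single_le_sum
        (f := fun s => if ∀ i, s i ≤ v i then polyDim d q 0 (fun i => v i - s i) else 0)
        (fun _ _ => Nat.zero_le _) hmem
  | succ n hn ih =>
    obtain ⟨i, j, hij, hi, hj⟩ := h2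
    by_cases h1 : v i < n * d
    · exact step_case d q n hd hn v hv i hi h1 ih
    · by_cases h2' : v j < n * d
      · exact step_case d q n hd hn v hv j hj h2' ih
      · push_neg at h1 h2'
        have hpair : v i + v j ≤ ∑ k, v k :=
          pair_le_sum v (Finset.mem_univ i) (Finset.mem_univ j) hij
        have hn1 : n = 1 := by nlinarith
        subst hn1
        have hvi : v i = d := by omega
        have hvj : v j = d := by omega
        set s : Fin q → ℕ := fun k => if k = i then d else 0 with hs
        set s' : Fin q → ℕ := fun k => if k = j then d else 0 with hs'
        have hsle : ∀ k, s k ≤ v k := by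
          intro k; by_cases hk : k = i
          · subst hk; simp [hs, hvi]
          · simp [hs, hk]
        have hs'le : ∀ k, s' k ≤ v k := by
          intro k; by_cases hk : k = j
          · subst hk; simp [hs', hvj]
          · simp [hs', hk]
        have hssum : ∑ k, s k = d := by simp [hs]
        have hs'sum : ∑ k, s' k = d := by simp [hs']
        have hmems : s ∈ Finset.Nat.antidiagonalTuple q d := by
          rw [Finset.Nat.mem_antidiagonalTuple]; exact hssum
        have hmems' : s' ∈ Finset.Nat.antidiagonalTuple q d := by
          rw [Finset.Nat.mem_antidiagonalTuple]; exact hs'sum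
        have hne : s ≠ s' := by
          intro h
          have := congrFun h i
          simp [hs, hs', hij] at this
          omega
        have hsub : ∑ k, (v k - s k) = 1 * d := by
          have := sum_sub_add q v s hsle; omega
        have hsub' : ∑ k, (v k - s' k) = 1 * d := by
          have := sum_sub_add q v s' hs'le; omega
        have hterm1 : 1 ≤ polyDim d q 1 (fun k => v k - s k) := polyDim_pos d q 1 _ hsub
        have hterm2 : 1 ≤ polyDim d q 1 (fun k => v k - s' k) := polyDim_pos d q 1 _ hsub'
        have hfinal :
            (if ∀ k, s k ≤ v k then polyDim d q 1 (fun k => v k - s k) else 0)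
            + (if ∀ k, s' k ≤ v k then polyDim d q 1 (fun k => v k - s' k) else 0)
            ≤ polyDim d q 2 v :=
          pair_le_sum (f := fun x => if ∀ k, x k ≤ v k then polyDim d q 1 (fun k => v k - x k) else 0)
            hmems hmems' hne
        rw [if_pos hsle, if_pos hs'le] at hfinal
        show 2 ≤ polyDim d q 2 v
        omega
end

section
/- For polynomial shape diagrams, for every ordering the set of minimal paths has measure zero with respect to every fully supported ergodic invariant Borel probability measure: the measure of the union of cylinders over minimal finite paths to level n+1 terminating at non-extreme vertices is at most 1/(n+1). -/
/-- The path space of a polynomial shape diagram: a path is a sequence of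
(step, edge-index) pairs, where the step is a nonnegative vector of coordinate sum
`d` and the edge index is less than the multiplicity `mult n u s` of edges from the
current vertex `u` at level `n` along step `s`. -/
abbrev PolyPathSpace (d q : ℕ) (mult : ℕ → (Fin q → ℕ) → (Fin q → ℕ) → ℕ) : Type :=
  {x : ℕ → (Fin q → ℕ) × ℕ //
    ∀ n, (∑ i, (x n).1 i = d) ∧
      (x n).2 < mult n (fun i => ∑ k ∈ Finset.range n, (x k).1 i) (x n).1}

/-- The vertex at level `n` reached by a (finite or infinite) path: the sum of its
first `n` steps. -/
def polyVertex {q : ℕ} (x : ℕ → (Fin q → ℕ) × ℕ) (n : ℕ) : Fin q → ℕ :=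
  fun i => ∑ k ∈ Finset.range n, (x k).1 i

/-- `α` is a valid finite path of length `m` from the root. -/
def ValidFinPath (d q : ℕ) (mult : ℕ → (Fin q → ℕ) → (Fin q → ℕ) → ℕ) (m : ℕ)
    (α : ℕ → (Fin q → ℕ) × ℕ) : Prop :=
  ∀ k < m, (∑ i, (α k).1 i = d) ∧
    (α k).2 < mult k (fun i => ∑ l ∈ Finset.range k, (α l).1 i) (α k).1

/-- The cylinder of infinite paths beginning with the length-`m` finite path `α`. -/
def polyCyl (d q : ℕ) (mult : ℕ → (Fin q → ℕ) → (Fin q → ℕ) → ℕ) (m : ℕ)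
    (α : ℕ → (Fin q → ℕ) × ℕ) : Set (PolyPathSpace d q mult) :=
  {x | ∀ k < m, x.1 k = α k}

/-!
A non-extreme vertex `v` of level `n + 1` has a coordinate `i` with `0 < v i < (n + 1) d`.
Filling the `i`-th coordinate greedily splits `v` into `n + 1` steps whose `i`-th coordinates
are antitone and not constant. Since an antitone sequence on `Fin (n + 1)` that is invariant
under a nontrivial rotation is constant, the `n + 1` cyclic rotations of this decomposition are
distinct paths to `v`. Their cylinders are disjoint and, by invariance, each has the measure of
the minimal cylinder to `v`; hence `n + 1` times the total measure of the minimal cylinders is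
at most `1`.
-/

open MeasureTheory

theorem Finset.exists_le_sum_eq {ι : Type*} [DecidableEq ι] (s : Finset ι) (c : ι → ℕ) {m : ℕ}
    (hm : m ≤ ∑ i ∈ s, c i) : ∃ x ≤ c, ∑ i ∈ s, x i = m := by
  induction s using Finset.induction_on generalizing m with
  | empty => exact ⟨0, fun _ => Nat.zero_le _, by simp at hm ⊢; omega⟩
  | insert a s ha ih =>
    rw [Finset.sum_insert ha] at hm
    obtain ⟨y, hyc, hy⟩ := ih (m := m - min m (c a)) (by omega)
    refine ⟨Function.update y a (min m (c a)), fun i => ?_, ?_⟩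
    · rcases eq_or_ne i a with rfl | hi
      · simp
      · simpa [hi] using hyc i
    · rw [Finset.sum_insert ha, Function.update_self,
        Finset.sum_congr rfl fun i hi => Function.update_of_ne (ne_of_mem_of_not_mem hi ha) _ _]
      omega

section Steps

variable {ι : Type*} [Fintype ι] [DecidableEq ι]

theorem exists_le_sum_eq_and_apply_eq_min (v : ι → ℕ) (i : ι) {d : ℕ} (hd : d ≤ ∑ j, v j) :
    ∃ x ≤ v, ∑ j, x j = d ∧ x i = min d (v i) := by
  rw [← Finset.add_sum_erase _ _ (Finset.mem_univ i)] at hd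
  obtain ⟨y, hyv, hy⟩ := (Finset.univ.erase i).exists_le_sum_eq v (m := d - min d (v i)) (by omega)
  refine ⟨Function.update y i (min d (v i)), fun j => ?_, ?_, by simp⟩
  · rcases eq_or_ne j i with rfl | hj
    · simp
    · simpa [hj] using hyv j
  · rw [← Finset.add_sum_erase _ _ (Finset.mem_univ i), Function.update_self,
      Finset.sum_congr rfl fun j hj => Function.update_of_ne (Finset.ne_of_mem_erase hj) _ _]
    omega

theorem exists_steps_apply_eq_min (i : ι) (d : ℕ) :
    ∀ (m : ℕ) (v : ι → ℕ), ∑ j, v j = m * d → ∃ σ : Fin m → ι → ℕ,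
      (∀ k, ∑ j, σ k j = d) ∧ ∑ k, σ k = v ∧ ∀ k, σ k i = min d (v i - k * d)
  | 0, v, hv => ⟨Fin.elim0, fun k => k.elim0, by simpa [eq_comm, funext_iff] using hv,
      fun k => k.elim0⟩
  | m + 1, v, hv => by
    obtain ⟨x, hxv, hx, hxi⟩ :=
      exists_le_sum_eq_and_apply_eq_min v i (d := d) (hv ▸ Nat.le_mul_of_pos_left d m.succ_pos)
    obtain ⟨σ, hσ, hσv, hσi⟩ := exists_steps_apply_eq_min i d m (v - x) (by
      rw [Pi.sub_def, Finset.sum_tsub_distrib _ fun j _ => hxv j, hv, hx, add_mul, one_mul,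
        Nat.add_sub_cancel])
    refine ⟨Fin.cons x σ, Fin.cases hx hσ, ?_, Fin.cases (by simpa using hxi) fun k => ?_⟩
    · rw [Fin.sum_cons, hσv, add_tsub_cancel_of_le hxv]
    · rw [Fin.cons_succ, hσi, Fin.val_succ, Pi.sub_apply, hxi, add_mul, one_mul]
      omega

end Steps

section Rotations

variable {α : Type*} [PartialOrder α] {n : ℕ} {g : Fin (n + 1) → α}

theorem Antitone.apply_zero_eq_apply_last_of_add_invariant (hg : Antitone g) {r : Fin (n + 1)}
    (hr : r ≠ 0) (hinv : ∀ k, g (k + r) = g k) : g 0 = g (Fin.last n) := by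
  refine le_antisymm ?_ (hg (Fin.zero_le _))
  calc g 0 = g r := by simpa using (hinv 0).symm
    _ ≤ g (r - 1) := hg (Fin.sub_one_lt_iff.2 (Fin.pos_iff_ne_zero.2 hr)).le
    _ = g (Fin.last n + r) := by rw [← neg_neg (Fin.last n), Fin.neg_last, neg_add_eq_sub]
    _ = g (Fin.last n) := hinv _

theorem Antitone.injective_rotations (hg : Antitone g) (hne : g 0 ≠ g (Fin.last n)) :
    Function.Injective fun t k => g (k + t) := by
  intro t t' h
  by_contra htt'
  refine hne (hg.apply_zero_eq_apply_last_of_add_invariant (sub_ne_zero.2 htt') fun k => ?_)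
  simpa [sub_add_eq_add_sub, add_sub_assoc] using congrFun h (k - t')

end Rotations

theorem exists_pos_lt_of_ne_single {ι : Type*} [Fintype ι] [DecidableEq ι] {N : ℕ} (hN : 0 < N)
    (v : ι → ℕ) (hv : ∑ j, v j = N) (hne : ¬ ∃ i, v = fun k => if k = i then N else 0) :
    ∃ i, 0 < v i ∧ v i < N := by
  obtain ⟨i, hi⟩ : ∃ i, 0 < v i := by
    by_contra! h
    simp [Nat.le_zero.1 (h _)] at hv
    omega
  refine ⟨i, hi, lt_of_le_of_ne (hv ▸ Finset.single_le_sum (by simp) (Finset.mem_univ i)) ?_⟩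
  intro hiN
  rw [← Finset.add_sum_erase _ _ (Finset.mem_univ i), hiN, Nat.add_eq_left,
    Finset.sum_eq_zero_iff] at hv
  refine hne ⟨i, funext fun k => ?_⟩
  split_ifs with hk
  · rw [hk, hiN]
  · exact hv k (Finset.mem_erase.2 ⟨hk, Finset.mem_univ k⟩)

theorem exists_injective_steps {ι : Type*} [Fintype ι] [DecidableEq ι] {d n : ℕ} (v : ι → ℕ)
    (hv : ∑ j, v j = (n + 1) * d) {i : ι} (hi₀ : 0 < v i) (hiN : v i < (n + 1) * d) :
    ∃ P : Fin (n + 1) → Fin (n + 1) → ι → ℕ,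
      Function.Injective P ∧ ∀ t, (∀ k, ∑ j, P t k j = d) ∧ ∑ k, P t k = v := by
  obtain ⟨σ, hσ, hσv, hσi⟩ := exists_steps_apply_eq_min i d (n + 1) v hv
  refine ⟨fun t k => σ (k + t), ?_, fun t => ⟨fun k => hσ _, ?_⟩⟩
  · rcases Nat.eq_zero_or_pos n with rfl | hn
    · exact fun t t' _ => Subsingleton.elim (α := Fin 1) t t'
    have hanti : Antitone fun k => σ k i := fun k k' hkk' => by
      simp only [hσi]
      gcongr
      exact hkk'
    have hlast : σ (Fin.last n) i < σ 0 i := by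
      have : d ≤ n * d := Nat.le_mul_of_pos_left d hn
      have : 0 < d := Nat.pos_of_ne_zero (by rintro rfl; simp at hiN)
      simp only [hσi, Fin.val_last, Fin.val_zero, zero_mul, Nat.sub_zero, Nat.min_def]
      rw [add_mul, one_mul] at hiN
      split_ifs <;> omega
    intro t t' h
    exact hanti.injective_rotations hlast.ne' (funext fun k => congrFun (congrFun h k) i)
  · exact (Equiv.sum_comp (Equiv.addRight t) σ).trans hσv

def pathOfSteps {q m : ℕ} (σ : Fin m → Fin q → ℕ) : ℕ → (Fin q → ℕ) × ℕ :=
  fun k => if h : k < m then (σ ⟨k, h⟩, 0) else (0, 0)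

section PathSpace

variable {d q m : ℕ} {mult : ℕ → (Fin q → ℕ) → (Fin q → ℕ) → ℕ}

theorem measurableSet_polyCyl (α : ℕ → (Fin q → ℕ) × ℕ) :
    MeasurableSet (polyCyl d q mult m α) := by
  have : polyCyl d q mult m α = ⋂ k ∈ Finset.range m, (fun x => x.1 k) ⁻¹' {α k} := by
    ext x; simp [polyCyl]
  rw [this]
  exact Finset.measurableSet_biInter _ fun k _ =>
    ((measurable_pi_apply k).comp measurable_subtype_coe) (measurableSet_singleton _)

theorem eq_of_mem_polyCyl_of_mem_polyCyl {α β : ℕ → (Fin q → ℕ) × ℕ}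
    {x : PolyPathSpace d q mult} (hα : x ∈ polyCyl d q mult m α) (hβ : x ∈ polyCyl d q mult m β) :
    ∀ k < m, α k = β k :=
  fun k hk => (hα k hk).symm.trans (hβ k hk)

theorem sum_measure_polyCyl_le_measure_univ (μ : Measure (PolyPathSpace d q mult))
    {κ : Type*} (s : Finset κ) (α : κ → ℕ → (Fin q → ℕ) × ℕ)
    (hα : ∀ i ∈ s, ∀ j ∈ s, (∀ k < m, α i k = α j k) → i = j) :
    ∑ i ∈ s, μ (polyCyl d q mult m (α i)) ≤ μ Set.univ := by
  rw [← measure_biUnion_finset (fun i hi j hj hij => Set.disjoint_left.2 fun x hxi hxj =>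
      hij (hα i hi j hj (eq_of_mem_polyCyl_of_mem_polyCyl hxi hxj)))
    fun i _ => measurableSet_polyCyl (α i)]
  exact measure_mono (Set.subset_univ _)

variable {σ τ : Fin m → Fin q → ℕ}

theorem validFinPath_pathOfSteps (hmult : ∀ k u s, ∑ i, s i = d → 1 ≤ mult k u s)
    (hσ : ∀ k, ∑ j, σ k j = d) : ValidFinPath d q mult m (pathOfSteps σ) := fun k hk => by
  simp only [pathOfSteps, dif_pos hk]
  exact ⟨hσ _, hmult _ _ _ (hσ _)⟩

theorem polyVertex_pathOfSteps : polyVertex (pathOfSteps σ) m = ∑ k, σ k := by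
  ext j
  simp [polyVertex, Finset.sum_range, pathOfSteps]

theorem eq_of_pathOfSteps_eq (h : ∀ k < m, pathOfSteps σ k = pathOfSteps τ k) : σ = τ :=
  funext fun k => by simpa [pathOfSteps] using h k k.2

theorem sum_sum_measure_polyCyl_pathOfSteps_le (μ : Measure (PolyPathSpace d q mult))
    {κ : Type*} [Fintype κ] (V : Finset (Fin q → ℕ)) (P : (Fin q → ℕ) → κ → Fin m → Fin q → ℕ)
    (hPinj : ∀ v ∈ V, Function.Injective (P v)) (hP : ∀ v ∈ V, ∀ t, ∑ k, P v t k = v) :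
    ∑ v ∈ V, ∑ t, μ (polyCyl d q mult m (pathOfSteps (P v t))) ≤ μ Set.univ := by
  rw [← Finset.sum_product' (f := fun v t => μ (polyCyl d q mult m (pathOfSteps (P v t))))]
  refine sum_measure_polyCyl_le_measure_univ μ _ _ fun p hp p' hp' hpp' => ?_
  obtain ⟨hv, -⟩ := Finset.mem_product.1 hp
  obtain ⟨hv', -⟩ := Finset.mem_product.1 hp'
  have hσ := eq_of_pathOfSteps_eq hpp'
  have hvv' : p.1 = p'.1 := by rw [← hP _ hv p.2, ← hP _ hv' p'.2, hσ]
  exact Prod.ext hvv' (hPinj _ hv (by rw [hσ, hvv']))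

end PathSpace

theorem minimal_cylinders_measure_le_general (d q n : ℕ) (hd : 0 < d)
    (mult : ℕ → (Fin q → ℕ) → (Fin q → ℕ) → ℕ)
    (hmult : ∀ k u s, ∑ i, s i = d → 1 ≤ mult k u s)
    (μ : MeasureTheory.Measure (PolyPathSpace d q mult))
    [MeasureTheory.IsProbabilityMeasure μ]
    -- invariance: cylinders over finite paths ending at the same vertex have equal
    -- measure
    (hinv : ∀ m (α β : ℕ → (Fin q → ℕ) × ℕ),
      ValidFinPath d q mult m α → ValidFinPath d q mult m β →
      polyVertex α m = polyVertex β m →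
      μ (polyCyl d q mult m α) = μ (polyCyl d q mult m β))
    -- a choice of one (e.g. the minimal) finite path to each level-(n+1) vertex
    (minP : (Fin q → ℕ) → ℕ → (Fin q → ℕ) × ℕ)
    (hminP : ∀ v : Fin q → ℕ, ∑ i, v i = (n + 1) * d →
      ValidFinPath d q mult (n + 1) (minP v) ∧ polyVertex (minP v) (n + 1) = v) :
    μ (⋃ v ∈ {v : Fin q → ℕ | ∑ i, v i = (n + 1) * d ∧
        ¬ ∃ i, v = fun k => if k = i then (n + 1) * d else 0},
      polyCyl d q mult (n + 1) (minP v)) ≤ 1 / ((n : ENNReal) + 1) := by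
  classical
  set V := (Finset.Nat.antidiagonalTuple q ((n + 1) * d)).filter
    fun v => ¬ ∃ i, v = fun k => if k = i then (n + 1) * d else 0
  have hV : ∀ v ∈ V, ∑ i, v i = (n + 1) * d := fun v hv =>
    Finset.Nat.mem_antidiagonalTuple.1 (Finset.mem_filter.1 hv).1
  have hsteps : ∀ v ∈ V, ∃ P : Fin (n + 1) → Fin (n + 1) → Fin q → ℕ,
      Function.Injective P ∧ ∀ t, (∀ k, ∑ j, P t k j = d) ∧ ∑ k, P t k = v := fun v hv => by
    obtain ⟨i, hi₀, hiN⟩ :=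
      exists_pos_lt_of_ne_single (by positivity) v (hV v hv) (Finset.mem_filter.1 hv).2
    exact exists_injective_steps v (hV v hv) hi₀ hiN
  choose! P hPinj hP using hsteps
  have hcyl : ∀ v ∈ V, ∀ t, μ (polyCyl d q mult (n + 1) (pathOfSteps (P v t))) =
      μ (polyCyl d q mult (n + 1) (minP v)) := fun v hv t =>
    hinv _ _ _ (validFinPath_pathOfSteps hmult (hP v hv t).1) (hminP v (hV v hv)).1
      (by rw [polyVertex_pathOfSteps, (hP v hv t).2, (hminP v (hV v hv)).2])
  have hsum := sum_sum_measure_polyCyl_pathOfSteps_le μ V P hPinj fun v hv t => (hP v hv t).2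
  simp only [Finset.sum_congr rfl fun v hv => Finset.sum_congr rfl fun t _ => hcyl v hv t,
    Finset.sum_const, Finset.card_univ, Fintype.card_fin, nsmul_eq_mul, measure_univ] at hsum
  calc μ _ ≤ ∑ v ∈ V, μ (polyCyl d q mult (n + 1) (minP v)) :=
        (measure_mono (Set.biUnion_subset_biUnion_left fun v hv => by
          simpa [V, Finset.Nat.mem_antidiagonalTuple] using hv)).trans
          (measure_biUnion_finset_le V _)
    _ ≤ 1 / ((n : ENNReal) + 1) := by
        rw [ENNReal.le_div_iff_mul_le (by simp) (by simp), Finset.sum_mul]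
        simpa [mul_comm] using hsum

/-- For polynomial shape diagrams, for every invariant Borel probability measure and
every choice of one minimal finite path to each vertex, the measure of the union of
the chosen (minimal) cylinders to the non-extreme level-`(n+1)` vertices is at most
`1/(n+1)`. -/
theorem minimal_cylinders_measure_le (d q n : ℕ) (hd : 0 < d) (hq : 2 ≤ q)
    (mult : ℕ → (Fin q → ℕ) → (Fin q → ℕ) → ℕ)
    (hmult : ∀ k u s, ∑ i, s i = d → 1 ≤ mult k u s)
    (μ : MeasureTheory.Measure (PolyPathSpace d q mult))
    [MeasureTheory.IsProbabilityMeasure μ]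
    -- invariance: cylinders over finite paths ending at the same vertex have equal
    -- measure
    (hinv : ∀ m (α β : ℕ → (Fin q → ℕ) × ℕ),
      ValidFinPath d q mult m α → ValidFinPath d q mult m β →
      polyVertex α m = polyVertex β m →
      μ (polyCyl d q mult m α) = μ (polyCyl d q mult m β))
    -- a choice of one (e.g. the minimal) finite path to each level-(n+1) vertex
    (minP : (Fin q → ℕ) → ℕ → (Fin q → ℕ) × ℕ)
    (hminP : ∀ v : Fin q → ℕ, ∑ i, v i = (n + 1) * d →
      ValidFinPath d q mult (n + 1) (minP v) ∧ polyVertex (minP v) (n + 1) = v) :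
    μ (⋃ v ∈ {v : Fin q → ℕ | ∑ i, v i = (n + 1) * d ∧
        ¬ ∃ i, v = fun k => if k = i then (n + 1) * d else 0},
      polyCyl d q mult (n + 1) (minP v)) ≤ 1 / ((n : ENNReal) + 1) :=
  minimal_cylinders_measure_le_general d q n hd mult hmult μ hinv minP hminP
end

section
/- A path x in the path space of a polynomial shape diagram has dense tail-equivalence orbit if and only if the minimum coordinate of its level-n vertex tends to infinity: lim_{n→∞} min_{1≤j≤q} v_n(x)(j) = ∞. -/
/-- Tail equivalence: the two paths pass through the same vertex at some level `N`
and use the same edges from level `N` on. -/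
def PolyTailEquiv {d q : ℕ} {mult : ℕ → (Fin q → ℕ) → (Fin q → ℕ) → ℕ}
    (x y : PolyPathSpace d q mult) : Prop :=
  ∃ N, polyVertex x.1 N = polyVertex y.1 N ∧ ∀ n ≥ N, x.1 n = y.1 n

lemma polyVertex_mono {q : ℕ} (x : ℕ → (Fin q → ℕ) × ℕ) (j : Fin q) :
    Monotone fun n => polyVertex x n j := fun a b hab =>
  Finset.sum_le_sum_of_subset (Finset.range_subset_range.2 hab)

lemma polyVertex_sum {d q : ℕ} {mult : ℕ → (Fin q → ℕ) → (Fin q → ℕ) → ℕ}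
    (x : PolyPathSpace d q mult) (n : ℕ) : ∑ i, polyVertex x.1 n i = n * d := by
  unfold polyVertex
  rw [Finset.sum_comm]
  rw [Finset.sum_congr rfl fun k _ => (x.2 k).1]
  simp [mul_comm]

lemma polyVertex_tail {q : ℕ} {a b : ℕ → (Fin q → ℕ) × ℕ} {N : ℕ}
    (h0 : polyVertex a N = polyVertex b N) (h : ∀ k ≥ N, a k = b k) :
    ∀ n ≥ N, polyVertex a n = polyVertex b n := by
  intro n hn
  funext j
  have key : ∀ c : ℕ → (Fin q → ℕ) × ℕ,
      polyVertex c n j = polyVertex c N j + ∑ k ∈ Finset.Ico N n, (c k).1 j := by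
    intro c
    unfold polyVertex
    simp only [Finset.range_eq_Ico]
    exact (Finset.sum_Ico_consecutive (fun k => (c k).1 j) (Nat.zero_le N) hn).symm
  rw [key a, key b, h0,
    Finset.sum_congr rfl fun k hk => by rw [h k (Finset.mem_Ico.1 hk).1]]

lemma exists_subvector (q : ℕ) : ∀ (d : ℕ) (c : Fin q → ℕ), d ≤ ∑ i, c i →
    ∃ s : Fin q → ℕ, (∀ i, s i ≤ c i) ∧ ∑ i, s i = d := by
  intro d
  induction d with
  | zero => exact fun c _ => ⟨0, fun i => Nat.zero_le _, by simp⟩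
  | succ d ih =>
    intro c hc
    obtain ⟨s, hs, hsum⟩ := ih c (le_trans (Nat.le_succ d) hc)
    have hj : ∃ j, s j < c j := by
      by_contra h
      push_neg at h
      have h1 : ∀ i ∈ Finset.univ, c i = s i := fun i _ => le_antisymm (h i) (hs i)
      have h2 : ∑ i, c i = ∑ i, s i := Finset.sum_congr rfl h1
      omega
    obtain ⟨j, hj⟩ := hj
    refine ⟨Function.update s j (s j + 1), fun i => ?_, ?_⟩
    · rcases eq_or_ne i j with rfl | h
      · rw [Function.update_self]; omega
      · rw [Function.update_of_ne h]; exact hs i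
    · rw [Finset.sum_update_of_mem (Finset.mem_univ j), ← Finset.erase_eq]
      rw [← Finset.sum_erase_add Finset.univ s (Finset.mem_univ j)] at hsum
      omega

lemma exists_decomp (q d : ℕ) (hq : 0 < q) : ∀ (n : ℕ) (a b : Fin q → ℕ),
    (∀ j, a j ≤ b j) → (∑ i, b i) = (∑ i, a i) + n * d →
    ∃ f : ℕ → Fin q → ℕ, (∀ k, ∑ i, f k i = d) ∧
      ∀ j, a j + ∑ k ∈ Finset.range n, f k j = b j := by
  intro n
  induction n with
  | zero =>
    intro a b hab hsum
    refine ⟨fun _ i => if i = ⟨0, hq⟩ then d else 0, fun k => ?_, fun j => ?_⟩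
    · rw [Finset.sum_ite_eq' Finset.univ _ (fun _ => d)]; simp
    · simp only [Finset.range_zero, Finset.sum_empty, add_zero]
      simp only [Nat.zero_mul, add_zero] at hsum
      exact (Finset.sum_eq_sum_iff_of_le (fun i _ => hab i)).1 hsum.symm j
        (Finset.mem_univ j)
  | succ n ih =>
    intro a b hab hsum
    have hc : ∑ i, (b i - a i) = ∑ i, b i - ∑ i, a i := by
      rw [eq_tsub_iff_add_eq_of_le (Finset.sum_le_sum fun i _ => hab i),
        ← Finset.sum_add_distrib]
      exact Finset.sum_congr rfl fun i _ => Nat.sub_add_cancel (hab i)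
    obtain ⟨s, hs, hsd⟩ := exists_subvector q d (fun j => b j - a j) (by
      rw [hc, hsum, Nat.succ_mul]; omega)
    obtain ⟨f, hf1, hf2⟩ := ih (fun j => a j + s j) b
      (fun j => show a j + s j ≤ b j by have h1 := hs j; have h2 := hab j; omega)
      (by rw [Finset.sum_add_distrib, hsd]
          rw [Nat.succ_mul] at hsum
          omega)
    refine ⟨fun k i => if k = 0 then s i else f (k - 1) i, fun k => ?_, fun j => ?_⟩
    · by_cases h : k = 0 <;> simp [h, hsd, hf1]
    · simp only [Finset.sum_range_succ', Nat.succ_ne_zero, if_false, if_pos,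
        Nat.add_sub_cancel, ite_true, ite_false, reduceIte]
      have := hf2 j
      omega

lemma polyVertex_add {q : ℕ} (c : ℕ → (Fin q → ℕ) × ℕ) {m n : ℕ} (h : m ≤ n) (j : Fin q) :
    polyVertex c n j = polyVertex c m j + ∑ k ∈ Finset.Ico m n, (c k).1 j := by
  unfold polyVertex
  simp only [Finset.range_eq_Ico]
  exact (Finset.sum_Ico_consecutive (fun k => (c k).1 j) (Nat.zero_le m) h).symm

/-- A path in the path space of a polynomial shape diagram has dense
tail-equivalence orbit iff the minimum coordinate of its level-`n` vertex tends to
infinity. -/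
theorem dense_orbit_iff_min_coordinate_tendsto (d q : ℕ) (hd : 0 < d) (hq : 2 ≤ q)
    (mult : ℕ → (Fin q → ℕ) → (Fin q → ℕ) → ℕ)
    (hmult : ∀ n u s, ∑ i, s i = d → 1 ≤ mult n u s)
    (x : PolyPathSpace d q mult) :
    Dense {y : PolyPathSpace d q mult | PolyTailEquiv x y} ↔
      Filter.Tendsto
        (fun n => Finset.univ.inf' (Finset.univ_nonempty_iff.mpr ⟨⟨0, by omega⟩⟩)
          fun j => polyVertex x.1 n j)
        Filter.atTop Filter.atTop := by
  constructor
  · intro hdense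
    apply Filter.tendsto_atTop_atTop_of_monotone
    · intro a b hab
      apply Finset.le_inf'
      intro j _
      exact le_trans (Finset.inf'_le _ (Finset.mem_univ j)) (polyVertex_mono x.1 j hab)
    · intro B
      by_contra hB
      push_neg at hB
      have hBj : ∃ j : Fin q, ∀ n, polyVertex x.1 n j < B := by
        by_contra h2
        push_neg at h2
        choose g hg using h2
        have hle : B ≤ Finset.univ.inf' (Finset.univ_nonempty_iff.mpr ⟨⟨0, by omega⟩⟩)
            fun j => polyVertex x.1 (Finset.univ.sup g) j := by
          apply Finset.le_inf'
          intro j _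
          exact le_trans (hg j) (polyVertex_mono x.1 j (Finset.le_sup (Finset.mem_univ j)))
        exact absurd (hB (Finset.univ.sup g)) (not_lt.2 hle)
      obtain ⟨j₀, hj₀⟩ := hBj
      set y0 : ℕ → (Fin q → ℕ) × ℕ := fun _ => (fun i => if i = j₀ then d else 0, 0) with hy0
      have hy0sum : ∀ n : ℕ, ∑ i, (y0 n).1 i = d := by
        intro n
        simp only [hy0]
        rw [Finset.sum_ite_eq' Finset.univ j₀ (fun _ => d)]
        simp
      have hyvalid : ∀ n, (∑ i, (y0 n).1 i = d) ∧
          (y0 n).2 < mult n (fun i => ∑ k ∈ Finset.range n, (y0 k).1 i) (y0 n).1 :=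
        fun n => ⟨hy0sum n, lt_of_lt_of_le Nat.one_pos (hmult _ _ _ (hy0sum n))⟩
      set U : Set (PolyPathSpace d q mult) := {z | ∀ n < B + 1, z.1 n = y0 n} with hU
      have hUopen : IsOpen U := by
        have hUeq : U = ⋂ n ∈ Finset.range (B + 1),
            {z : PolyPathSpace d q mult | z.1 n = y0 n} := by
          ext z
          simp [hU, Finset.mem_range]
        rw [hUeq]
        apply isOpen_biInter_finset
        intro n _
        show IsOpen ((fun z : PolyPathSpace d q mult => z.1 n) ⁻¹' {y0 n})
        exact (isOpen_discrete _).preimage ((continuous_apply n).comp continuous_subtype_val)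
      obtain ⟨z, hzU, hzS⟩ := hdense.inter_open_nonempty U hUopen ⟨⟨y0, hyvalid⟩, fun n _ => rfl⟩
      obtain ⟨N, hvN, hsteps⟩ := hzS
      have htail := polyVertex_tail hvN hsteps
      have h1 : polyVertex x.1 (max N (B + 1)) j₀ = polyVertex z.1 (max N (B + 1)) j₀ :=
        congrFun (htail _ (le_max_left _ _)) j₀
      have hzU' : ∀ n < B + 1, z.1 n = y0 n := hzU
      have h2 : polyVertex z.1 (B + 1) j₀ = (B + 1) * d := by
        unfold polyVertex
        rw [Finset.sum_congr rfl (fun k hk => by rw [hzU' k (Finset.mem_range.1 hk)])]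
        simp [hy0]
      have h3 : polyVertex z.1 (B + 1) j₀ ≤ polyVertex z.1 (max N (B + 1)) j₀ :=
        polyVertex_mono z.1 j₀ (le_max_right N (B + 1))
      have h4 := hj₀ (max N (B + 1))
      have h5 : B + 1 ≤ (B + 1) * d := Nat.le_mul_of_pos_right _ hd
      omega
  · intro htend
    intro y
    have key : ∀ m : ℕ, ∃ z : PolyPathSpace d q mult,
        PolyTailEquiv x z ∧ ∀ n < m, z.1 n = y.1 n := by
      intro m
      obtain ⟨N0, hN0⟩ := Filter.eventually_atTop.1 (Filter.tendsto_atTop.1 htend (m * d))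
      set N := max N0 m with hN
      have hmN : m ≤ N := le_max_right _ _
      have hbig : ∀ j, m * d ≤ polyVertex x.1 N j := by
        intro j
        exact (Finset.le_inf'_iff _ _).1 (hN0 N (le_max_left _ _)) j (Finset.mem_univ j)
      have hab : ∀ j, polyVertex y.1 m j ≤ polyVertex x.1 N j := by
        intro j
        refine le_trans (le_trans ?_ (le_of_eq (polyVertex_sum y m))) (hbig j)
        exact Finset.single_le_sum (fun i _ => Nat.zero_le _) (Finset.mem_univ j)
      have hsum : ∑ i, polyVertex x.1 N i = (∑ i, polyVertex y.1 m i) + (N - m) * d := by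
        rw [polyVertex_sum, polyVertex_sum,
          show N * d = (m + (N - m)) * d from by rw [Nat.add_sub_cancel' hmN], add_mul]
      obtain ⟨f, hf1, hf2⟩ := exists_decomp q d (by omega) (N - m) _ _ hab hsum
      set z0 : ℕ → (Fin q → ℕ) × ℕ := fun n =>
        if n < m then y.1 n else if n < N then (f (n - m), 0) else x.1 n with hz0
      have hv1 : ∀ n ≤ m, polyVertex z0 n = polyVertex y.1 n := by
        intro n hn
        funext j
        refine Finset.sum_congr rfl fun k hk => ?_
        have : k < m := lt_of_lt_of_le (Finset.mem_range.1 hk) hn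
        simp only [hz0]
        rw [if_pos this]
      have hvN2 : polyVertex z0 N = polyVertex x.1 N := by
        funext j
        rw [polyVertex_add z0 hmN j, congrFun (hv1 m le_rfl) j, ← hf2 j]
        congr 1
        rw [Finset.sum_Ico_eq_sum_range]
        refine Finset.sum_congr (by rfl) fun k hk => ?_
        have hk' := Finset.mem_range.1 hk
        simp only [hz0]
        rw [if_neg (by omega), if_pos (by omega)]
        simp
      have hzx : ∀ k ≥ N, z0 k = x.1 k := by
        intro k hk
        simp only [hz0]
        rw [if_neg (by omega), if_neg (by omega)]
      have hv3 : ∀ n ≥ N, polyVertex z0 n = polyVertex x.1 n := polyVertex_tail hvN2 hzx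
      have hzvalid : ∀ n, (∑ i, (z0 n).1 i = d) ∧
          (z0 n).2 < mult n (fun i => ∑ k ∈ Finset.range n, (z0 k).1 i) (z0 n).1 := by
        intro n
        have hvn : (fun i => ∑ k ∈ Finset.range n, (z0 k).1 i) = polyVertex z0 n := rfl
        rcases lt_or_ge n m with h | h
        · have hz : z0 n = y.1 n := by simp only [hz0]; rw [if_pos h]
          rw [hvn, hz, hv1 n (le_of_lt h)]
          exact y.2 n
        rcases lt_or_ge n N with h2 | h2
        · have hz : z0 n = (f (n - m), 0) := by
            simp only [hz0]; rw [if_neg (not_lt.2 h), if_pos h2]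
          rw [hz]
          exact ⟨hf1 (n - m), lt_of_lt_of_le Nat.one_pos (hmult _ _ _ (hf1 (n - m)))⟩
        · rw [hvn, hzx n h2, hv3 n h2]
          exact x.2 n
      refine ⟨⟨z0, hzvalid⟩, ⟨N, hvN2.symm, fun n hn => (hzx n hn).symm⟩, fun n hn => ?_⟩
      simp only [hz0]
      rw [if_pos hn]
    choose Z hZ1 hZ2 using key
    have htt : Filter.Tendsto Z Filter.atTop (nhds y) := by
      rw [tendsto_subtype_rng, tendsto_pi_nhds]
      intro n
      apply tendsto_nhds_of_eventually_eq
      filter_upwards [Filter.eventually_ge_atTop (n + 1)] with m hm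
      exact hZ2 m n (by omega)
    exact mem_closure_of_tendsto htt (Filter.Eventually.of_forall hZ1)
end
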